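/- arXiv:1411.1096 — 2 statements merged into one kernel-verified Lean document; each statement's English description precedes it below -/
import Mathlib

section
/- Every Monk algebra obtained from E^{23}_q by splitting is a special extension of every subalgebra of E^{23}_q. -/
universe u v

/-- Non-associative relation algebras: Boolean algebras with a binary
relative multiplication `comp`, unary converse `conv`, and identity `ide`. -/
class NA (α : Type u) extends BooleanAlgebra α where
  comp : α → α → α
  conv : α → α
  ide : α
  comp_ide : ∀ x : α, comp x ide = x
  ide_comp : ∀ x : α, comp ide x = x
  conv_conv : ∀ x : α, conv (conv x) = x
  conv_sup : ∀ x y : α, conv (x ⊔ y) = conv x ⊔ conv y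
  comp_sup : ∀ x y z : α, comp x (y ⊔ z) = comp x y ⊔ comp x z
  sup_comp : ∀ x y z : α, comp (x ⊔ y) z = comp x z ⊔ comp y z
  peirce1 : ∀ x y z : α, comp x y ⊓ z = ⊥ ↔ comp (conv x) z ⊓ y = ⊥
  peirce2 : ∀ x y z : α, comp x y ⊓ z = ⊥ ↔ comp z (conv y) ⊓ x = ⊥

/-- Relation algebras: associative non-associative relation algebras. -/
class RA (α : Type u) extends NA α where
  comp_assoc : ∀ x y z : α, comp (comp x y) z = comp x (comp y z)

namespace NA

variable {α : Type u} [NA α]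

/-- The diversity element 0'. -/
def div : α := (ide : α)ᶜ

/-- Converse is the identity. -/
def Symmetric (α : Type u) [NA α] : Prop := ∀ x : α, conv x = x

/-- The identity 1' is an atom. -/
def Integral (α : Type u) [NA α] : Prop := IsAtom (ide : α)

/-- A diversity atom: an atom below 0'. -/
def DivAtom (x : α) : Prop := IsAtom x ∧ x ≤ (div : α)

/-- A subalgebra of a (non-associative) relation algebra. -/
structure Subalgebra (α : Type u) [NA α] where
  carrier : Set α
  bot_mem : ⊥ ∈ carrier
  top_mem : ⊤ ∈ carrier
  ide_mem : ide ∈ carrier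
  compl_mem : ∀ x ∈ carrier, xᶜ ∈ carrier
  sup_mem : ∀ x ∈ carrier, ∀ y ∈ carrier, x ⊔ y ∈ carrier
  comp_mem : ∀ x ∈ carrier, ∀ y ∈ carrier, comp x y ∈ carrier
  conv_mem : ∀ x ∈ carrier, conv x ∈ carrier

/-- An atom of a subalgebra: a minimal nonzero element of the subalgebra. -/
def Subalgebra.AtomOf (E : Subalgebra α) (a : α) : Prop :=
  a ∈ E.carrier ∧ a ≠ ⊥ ∧ ∀ b ∈ E.carrier, b ≤ a → b = ⊥ ∨ b = a

/-- A diversity atom of a subalgebra. -/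
def Subalgebra.DivAtomOf (E : Subalgebra α) (a : α) : Prop :=
  E.AtomOf a ∧ a ≤ (div : α)

/-- `α` is (a copy of) the algebra E^{23}_q with atoms `e 0 = 1', e 1, …, e (q-1)`:
symmetric, integral, distinct diversity atoms multiply to 0', and
`e i ; e i = (e i)ᶜ` for diversity atoms. -/
def IsE23 (q : ℕ) (e : Fin q → α) : Prop :=
  Symmetric α ∧ Integral α ∧
  Function.Injective e ∧ (∀ i : Fin q, (i : ℕ) = 0 → e i = ide) ∧
  (∀ i, IsAtom (e i)) ∧
  (∀ x : α, IsAtom x → ∃ i, x = e i) ∧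
  (∀ i j : Fin q, (i : ℕ) ≠ 0 → (j : ℕ) ≠ 0 → i ≠ j →
    comp (e i) (e j) = (div : α)) ∧
  (∀ i : Fin q, (i : ℕ) ≠ 0 → comp (e i) (e i) = (e i)ᶜ)

/-- The subalgebra `Q` of `α` is a copy of E^{23}_q with atoms `e i`. -/
def IsE23Sub (Q : Subalgebra α) (q : ℕ) (e : Fin q → α) : Prop :=
  Function.Injective e ∧ (∀ i : Fin q, (i : ℕ) = 0 → e i = ide) ∧
  (∀ i, Q.AtomOf (e i)) ∧
  (∀ x : α, Q.AtomOf x → ∃ i, x = e i) ∧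
  (∀ i j : Fin q, (i : ℕ) ≠ 0 → (j : ℕ) ≠ 0 → i ≠ j →
    comp (e i) (e j) = (div : α)) ∧
  (∀ i : Fin q, (i : ℕ) ≠ 0 → comp (e i) (e i) = (e i)ᶜ)

/-- `cov` is a cover map for the subalgebra `E`: it sends each atom of the
ambient algebra to the atom of `E` containing it. -/
def CoverMap (E : Subalgebra α) (cov : α → α) : Prop :=
  ∀ x : α, IsAtom x → E.AtomOf (cov x) ∧ x ≤ cov x

/-- The ambient atomic algebra is obtained from the subalgebra `B` by
splitting, with cover map `cov`. -/
def Splitting (B : Subalgebra α) (cov : α → α) : Prop :=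
  CoverMap B cov ∧
  (∀ x y : α, DivAtom x → DivAtom y →
    (x = conv y → comp x y = comp (cov x) (cov y)) ∧
    (x ≠ conv y → comp x y = comp (cov x) (cov y) ⊓ (div : α)))

/-- The ambient algebra is a special extension of its subalgebra `E`. -/
def SpecialExt (E : Subalgebra α) : Prop :=
  (∀ a b c : α, E.DivAtomOf a → E.DivAtomOf b → E.DivAtomOf c →
    ¬(a = b ∧ b = c) → c ≤ comp a b →
    ∀ x y : α, IsAtom x → IsAtom y → x ≤ a → y ≤ b → c ≤ comp x y) ∧
  (∀ a : α, E.DivAtomOf a → a ≤ comp a a →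
    ∀ x y : α, IsAtom x → IsAtom y → x ≤ a → y ≤ a → comp x y ⊓ a ≠ ⊥)

/-- A flexible atom. -/
def Flexible (a : α) : Prop :=
  DivAtom a ∧ comp a a = ⊤ ∧
  ∀ x : α, DivAtom x → x ≠ a → comp x a = (div : α)

/-- A flexible atom of a subalgebra. -/
def FlexibleOf (E : Subalgebra α) (a : α) : Prop :=
  E.DivAtomOf a ∧ comp a a = ⊤ ∧
  ∀ x : α, E.DivAtomOf x → x ≠ a → comp x a = (div : α)

/-- A flexible trio of diversity atoms. -/
def FlexTrio (a b c : α) : Prop :=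
  DivAtom a ∧ DivAtom b ∧ DivAtom c ∧ a ≠ b ∧ a ≠ c ∧ b ≠ c ∧
  comp a a = ⊤ ∧ comp b b = ⊤ ∧ comp c c = ⊤ ∧
  comp a b = (div : α) ∧ comp a c = (div : α) ∧ comp b c = (div : α) ∧
  ∀ x : α, IsAtom x → x ∉ ({(ide : α), a, b, c} : Set α) →
    (comp x a = (div : α) ∧ comp x b = (div : α)) ∨
    (comp x a = (div : α) ∧ comp x c = (div : α)) ∨
    (comp x b = (div : α) ∧ comp x c = (div : α))

/-- A flexible trio of diversity atoms of a subalgebra. -/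
def FlexTrioOf (E : Subalgebra α) (a b c : α) : Prop :=
  E.DivAtomOf a ∧ E.DivAtomOf b ∧ E.DivAtomOf c ∧ a ≠ b ∧ a ≠ c ∧ b ≠ c ∧
  comp a a = ⊤ ∧ comp b b = ⊤ ∧ comp c c = ⊤ ∧
  comp a b = (div : α) ∧ comp a c = (div : α) ∧ comp b c = (div : α) ∧
  ∀ d : α, E.DivAtomOf d → d ∉ ({a, b, c} : Set α) →
    (comp d a = (div : α) ∧ comp d b = (div : α)) ∨
    (comp d a = (div : α) ∧ comp d c = (div : α)) ∨
    (comp d b = (div : α) ∧ comp d c = (div : α))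

/-- Basic k-by-k matrices of atoms. -/
def BasicMatrix (k : ℕ) (μ : Fin k → Fin k → α) : Prop :=
  (∀ i j, IsAtom (μ i j)) ∧ (∀ i, μ i i ≤ (ide : α)) ∧
  (∀ i j, conv (μ i j) = μ j i) ∧
  (∀ i j l, μ i j ≤ comp (μ i l) (μ l j))

/-- The identity condition for a basic matrix. -/
def IdCond (k : ℕ) (μ : Fin k → Fin k → α) : Prop :=
  ∀ i j, μ i j = (ide : α) ↔ i = j

/-- The 1-point extension property. -/
def OnePointExt (α : Type u) [NA α] : Prop :=
  ∀ (k : ℕ) (μ : Fin k → Fin k → α), BasicMatrix k μ → IdCond k μ →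
  ∀ x y : α, DivAtom x → DivAtom y → ∀ i j : Fin k, i ≠ j → μ i j ≤ comp x y →
  ∃ μ' : Fin (k + 1) → Fin (k + 1) → α, BasicMatrix (k + 1) μ' ∧ IdCond (k + 1) μ' ∧
    (∀ l m : Fin k, μ' l.castSucc m.castSucc = μ l m) ∧
    μ' i.castSucc (Fin.last k) = x ∧ μ' (Fin.last k) j.castSucc = y

/-- A representation of `α` over a base set `X`. -/
structure Representation (α : Type u) [NA α] (X : Type v) where
  toFun : α → Set (X × X)
  inj : Function.Injective toFun
  map_sup : ∀ a b : α, toFun (a ⊔ b) = toFun a ∪ toFun b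
  map_compl : ∀ a : α, toFun aᶜ = toFun ⊤ \ toFun a
  map_comp : ∀ a b : α,
    toFun (comp a b) = {p | ∃ z, (p.1, z) ∈ toFun a ∧ (z, p.2) ∈ toFun b}
  map_conv : ∀ a : α, toFun (conv a) = {p | (p.2, p.1) ∈ toFun a}
  map_ide : toFun ide = {p | p ∈ toFun ⊤ ∧ p.1 = p.2}

/-- A complete representation: preserves all existing joins. -/
def Representation.IsComplete {α : Type u} [NA α] {X : Type v}
    (r : Representation α X) : Prop :=
  ∀ (S : Set α) (s : α), IsLUB S s → r.toFun s = ⋃ a ∈ S, r.toFun a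

/-- Representability. -/
def Representable (α : Type u) [NA α] : Prop :=
  ∃ X : Type u, Nonempty (Representation α X)

/-- A representation of a subalgebra `E` over a base set `X`. -/
structure SubRepresentation (E : Subalgebra α) (X : Type v) where
  toFun : α → Set (X × X)
  inj : ∀ x ∈ E.carrier, ∀ y ∈ E.carrier, toFun x = toFun y → x = y
  map_sup : ∀ x ∈ E.carrier, ∀ y ∈ E.carrier, toFun (x ⊔ y) = toFun x ∪ toFun y
  map_compl : ∀ x ∈ E.carrier, toFun xᶜ = toFun ⊤ \ toFun x
  map_comp : ∀ x ∈ E.carrier, ∀ y ∈ E.carrier,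
    toFun (comp x y) = {p | ∃ z, (p.1, z) ∈ toFun x ∧ (z, p.2) ∈ toFun y}
  map_conv : ∀ x ∈ E.carrier, toFun (conv x) = {p | (p.2, p.1) ∈ toFun x}
  map_ide : toFun ide = {p | p ∈ toFun ⊤ ∧ p.1 = p.2}

/-- A homomorphism of (non-associative) relation algebras. -/
structure Hom (α : Type u) (β : Type v) [NA α] [NA β] where
  toFun : α → β
  map_sup : ∀ a b : α, toFun (a ⊔ b) = toFun a ⊔ toFun b
  map_compl : ∀ a : α, toFun aᶜ = (toFun a)ᶜ
  map_comp : ∀ a b : α, toFun (comp a b) = comp (toFun a) (toFun b)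
  map_conv : ∀ a : α, toFun (conv a) = conv (toFun a)
  map_ide : toFun ide = ide

/-- The thinning relation T(i,j,k) ⟺ (i ≤ j = k) ∨ (j ≤ k = i) ∨ (k ≤ i = j). -/
def T3 (i j k : ℕ) : Prop :=
  (i ≤ j ∧ j = k) ∨ (j ≤ k ∧ k = i) ∨ (k ≤ i ∧ i = j)

/-- The type of diversity atoms of `α`. -/
abbrev DAt (α : Type u) [NA α] : Type u := {x : α // DivAtom x}

/-- Atoms of the algebra C_E(A): the identity atom `none` together with
copies `some (x, i)` of each diversity atom `x` of `A`, for `i ∈ ω`. -/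
abbrev CAtom (α : Type u) [NA α] : Type u := Option (DAt α × ℕ)

/-- The cycle relation of the atom structure of C_E(A), relative to the cover
map `cov` of the subalgebra E. -/
def Cyc (cov : α → α) : CAtom α → CAtom α → CAtom α → Prop
  | none, none, none => True
  | none, some p, some q => p = q
  | some p, none, some q => p = q
  | some p, some q, none => p = q
  | some p, some q, some r =>
      r.1.1 ≤ comp p.1.1 q.1.1 ∧
      (cov p.1.1 = cov q.1.1 ∧ cov q.1.1 = cov r.1.1 → T3 p.2 q.2 r.2)
  | _, _, _ => False

/-- Relative multiplication in the complex algebra C_E(A). -/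
def Ccomp (cov : α → α) (X Y : Set (CAtom α)) : Set (CAtom α) :=
  {w | ∃ u ∈ X, ∃ v ∈ Y, Cyc cov u v w}

/-- The element J(a, n) of C_E(A). -/
def Jel (a : α) (n : ℕ) : Set (CAtom α) :=
  {w | (∃ p : DAt α × ℕ, w = some p ∧ p.1.1 ≤ a ∧ n ≤ p.2) ∨
       (w = none ∧ (ide : α) ≤ a)}

/-- The atom set B_n of the finite subalgebra of C_E(A). -/
def Bset (E : Subalgebra α) (n : ℕ) : Set (Set (CAtom α)) :=
  {s | s = ({none} : Set (CAtom α))} ∪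
  {s | ∃ (x : DAt α) (i : ℕ), i < n ∧ s = {some (x, i)}} ∪
  {s | ∃ a : α, E.DivAtomOf a ∧ s = Jel a n}

/-- Subalgebra of C_E(A) generated by a set `G` of elements. -/
inductive GenFrom (cov : α → α) (G : Set (Set (CAtom α))) : Set (CAtom α) → Prop
  | base {s : Set (CAtom α)} : s ∈ G → GenFrom cov G s
  | bot : GenFrom cov G ∅
  | idel : GenFrom cov G ({none} : Set (CAtom α))
  | compl {s : Set (CAtom α)} : GenFrom cov G s → GenFrom cov G sᶜ
  | sup {s t : Set (CAtom α)} : GenFrom cov G s → GenFrom cov G t →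
      GenFrom cov G (s ∪ t)
  | cmp {s t : Set (CAtom α)} : GenFrom cov G s → GenFrom cov G t →
      GenFrom cov G (Ccomp cov s t)

/-- Membership in the subalgebra B of C_E(A) generated by the atoms. -/
def Gen (cov : α → α) : Set (CAtom α) → Prop :=
  GenFrom cov {s | ∃ w : CAtom α, s = {w}}

end NA

/-!
Splitting only shrinks products by the identity: for diversity atoms `x, y` one has
`cov x ; cov y · 0' ≤ x ; y`. In E^{23}_q the product of two distinct diversity atoms is
`0'` and `e ; e = eᶜ`, so `x ; y` contains every diversity atom off `cov x`, and all of
`0'` when `cov x ≠ cov y`. A diversity atom `c` of a subalgebra `E ⊆ E^{23}_q` can be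
missing from `x ; y` only if `cov x = cov y ≤ c`; this common cover then lies below the
`E`-atoms `a ≥ x`, `b ≥ y` and `c`, forcing `a = b = c`. For condition (ii), `x ; y · a = 0`
would force `a = cov x`, and then `a ≤ a ; a = aᶜ`.
-/

namespace NA

variable {α : Type u} [NA α]

lemma Subalgebra.inf_mem (S : Subalgebra α) {x y : α}
    (hx : x ∈ S.carrier) (hy : y ∈ S.carrier) : x ⊓ y ∈ S.carrier := by
  simpa using S.compl_mem _ (S.sup_mem _ (S.compl_mem _ hx) _ (S.compl_mem _ hy))

lemma Subalgebra.div_mem (S : Subalgebra α) : (div : α) ∈ S.carrier :=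
  S.compl_mem _ S.ide_mem

lemma Subalgebra.AtomOf.disjoint_or_le {S : Subalgebra α} {a b : α} (ha : S.AtomOf a)
    (hb : b ∈ S.carrier) : Disjoint a b ∨ a ≤ b :=
  (ha.2.2 _ (S.inf_mem ha.1 hb) inf_le_left).imp disjoint_iff.mpr inf_eq_left.mp

lemma Subalgebra.AtomOf.le_of_inf_ne_bot {S : Subalgebra α} {a b : α} (ha : S.AtomOf a)
    (hb : b ∈ S.carrier) (h : a ⊓ b ≠ ⊥) : a ≤ b :=
  (ha.disjoint_or_le hb).resolve_left (disjoint_iff.not.mpr h)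

lemma Subalgebra.AtomOf.eq_of_le_of_le {S : Subalgebra α} {a b d : α} (ha : S.AtomOf a)
    (hb : S.AtomOf b) (hd : d ≠ ⊥) (hda : d ≤ a) (hdb : d ≤ b) : a = b := by
  have hab : a ⊓ b ≠ ⊥ := fun h => hd (le_bot_iff.mp (h ▸ le_inf hda hdb))
  exact le_antisymm (ha.le_of_inf_ne_bot hb.1 hab)
    (hb.le_of_inf_ne_bot ha.1 (by rwa [inf_comm]))

lemma CoverMap.cover_le {B : Subalgebra α} {cov : α → α} (hcov : CoverMap B cov) {x a : α}
    (hx : IsAtom x) (ha : a ∈ B.carrier) (hxa : x ≤ a) : cov x ≤ a :=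
  (hcov x hx).1.le_of_inf_ne_bot ha fun h =>
    hx.1 (le_bot_iff.mp (h ▸ le_inf (hcov x hx).2 hxa))

lemma Splitting.comp_cover_inf_div_le {B : Subalgebra α} {cov : α → α}
    (hsplit : Splitting B cov) {x y : α} (hx : DivAtom x) (hy : DivAtom y) :
    comp (cov x) (cov y) ⊓ div ≤ comp x y := by
  by_cases hxy : x = conv y
  · rw [(hsplit.2 x y hx hy).1 hxy]
    exact inf_le_left
  · exact ((hsplit.2 x y hx hy).2 hxy).ge

section E23

variable {Q : Subalgebra α} {q : ℕ} {e : Fin q → α} {cov : α → α}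

lemma IsE23Sub.ne_zero_of_le_div (hQ : IsE23Sub Q q e) {i : Fin q} (h : e i ≤ div) :
    (i : ℕ) ≠ 0 := by
  intro h0
  have hle : e i ≤ (e i)ᶜ := by
    rw [hQ.2.1 i h0] at h ⊢
    exact h
  exact (hQ.2.2.1 i).2.1 (le_compl_self.mp hle)

lemma IsE23Sub.exists_cover_eq (hQ : IsE23Sub Q q e) (hcov : CoverMap Q cov) {x : α}
    (hx : DivAtom x) : ∃ i : Fin q, (i : ℕ) ≠ 0 ∧ cov x = e i := by
  obtain ⟨i, hi⟩ := hQ.2.2.2.1 _ (hcov x hx.1).1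
  exact ⟨i, hQ.ne_zero_of_le_div (hi ▸ hcov.cover_le hx.1 Q.div_mem hx.2), hi⟩

lemma IsE23Sub.comp_cover_self (hQ : IsE23Sub Q q e) (hcov : CoverMap Q cov) {x : α}
    (hx : DivAtom x) : comp (cov x) (cov x) = (cov x)ᶜ := by
  obtain ⟨i, hi, hxi⟩ := hQ.exists_cover_eq hcov hx
  rw [hxi, hQ.2.2.2.2.2 i hi]

lemma IsE23Sub.div_le_comp_of_cover_ne (hQ : IsE23Sub Q q e) (hsplit : Splitting Q cov)
    {x y : α} (hx : DivAtom x) (hy : DivAtom y) (hxy : cov x ≠ cov y) :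
    div ≤ comp x y := by
  obtain ⟨i, hi, hxi⟩ := hQ.exists_cover_eq hsplit.1 hx
  obtain ⟨j, hj, hyj⟩ := hQ.exists_cover_eq hsplit.1 hy
  have hij : i ≠ j := by
    rintro rfl
    exact hxy (hxi.trans hyj.symm)
  have hdiv := hsplit.comp_cover_inf_div_le hx hy
  rwa [hxi, hyj, hQ.2.2.2.2.1 i j hi hj hij, inf_idem] at hdiv

lemma IsE23Sub.cover_compl_inf_div_le_comp (hQ : IsE23Sub Q q e) (hsplit : Splitting Q cov)
    {x y : α} (hx : DivAtom x) (hy : DivAtom y) : (cov x)ᶜ ⊓ div ≤ comp x y := by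
  by_cases hxy : cov x = cov y
  · have hcomp := hsplit.comp_cover_inf_div_le hx hy
    rwa [← hxy, hQ.comp_cover_self hsplit.1 hx] at hcomp
  · exact inf_le_right.trans (hQ.div_le_comp_of_cover_ne hsplit hx hy hxy)

theorem IsE23Sub.le_comp_of_splitting (hQ : IsE23Sub Q q e) (hsplit : Splitting Q cov)
    {E : Subalgebra α} (hE : E.carrier ⊆ Q.carrier) {a b c : α} (ha : E.DivAtomOf a)
    (hb : E.DivAtomOf b) (hc : E.DivAtomOf c) (hne : ¬(a = b ∧ b = c)) {x y : α}
    (hx : IsAtom x) (hy : IsAtom y) (hxa : x ≤ a) (hyb : y ≤ b) : c ≤ comp x y := by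
  have hxd : DivAtom x := ⟨hx, hxa.trans ha.2⟩
  have hyd : DivAtom y := ⟨hy, hyb.trans hb.2⟩
  obtain hxy | hxy := ne_or_eq (cov x) (cov y)
  · exact hc.2.trans (hQ.div_le_comp_of_cover_ne hsplit hxd hyd hxy)
  have hcovQ := (hsplit.1 x hx).1
  rcases hcovQ.disjoint_or_le (hE hc.1.1) with hdisj | hcovc
  · exact (le_inf (le_compl_iff_disjoint_left.mpr hdisj) hc.2).trans
      (hQ.cover_compl_inf_div_le_comp hsplit hxd hyd)
  have hcova : cov x ≤ a := hsplit.1.cover_le hx (hE ha.1.1) hxa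
  have hcovb : cov x ≤ b := hxy ▸ hsplit.1.cover_le hy (hE hb.1.1) hyb
  have hac := ha.1.eq_of_le_of_le hc.1 hcovQ.2.1 hcova hcovc
  have hbc := hb.1.eq_of_le_of_le hc.1 hcovQ.2.1 hcovb hcovc
  exact absurd ⟨hac.trans hbc.symm, hbc⟩ hne

theorem IsE23Sub.comp_inf_ne_bot_of_splitting (hQ : IsE23Sub Q q e)
    (hsplit : Splitting Q cov) {E : Subalgebra α} (hE : E.carrier ⊆ Q.carrier) {a : α}
    (ha : E.DivAtomOf a) (haa : a ≤ comp a a) {x y : α} (hx : IsAtom x) (hy : IsAtom y)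
    (hxa : x ≤ a) (hya : y ≤ a) : comp x y ⊓ a ≠ ⊥ := by
  have hxd : DivAtom x := ⟨hx, hxa.trans ha.2⟩
  have hyd : DivAtom y := ⟨hy, hya.trans ha.2⟩
  intro hbot
  have hacov : a ≤ cov x := by
    refine disjoint_compl_left_iff.mp (disjoint_iff.mpr (le_bot_iff.mp ?_))
    calc (cov x)ᶜ ⊓ a ≤ comp x y ⊓ a :=
          le_inf ((inf_le_inf_left _ ha.2).trans
            (hQ.cover_compl_inf_div_le_comp hsplit hxd hyd)) inf_le_right
      _ = ⊥ := hbot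
  have hcova : cov x = a :=
    le_antisymm (hsplit.1.cover_le hx (hE ha.1.1) hxa) hacov
  have haself : a ≤ aᶜ := by
    rw [← hcova, hQ.comp_cover_self hsplit.1 hxd] at haa
    rwa [← hcova]
  exact ha.1.2.1 (le_compl_self.mp haself)

end E23

end NA

theorem stmt1_general {α : Type} [RA α]
    (q : ℕ) (Q : NA.Subalgebra α) (e : Fin q → α)
    (hQ : NA.IsE23Sub Q q e) (cov : α → α) (hsplit : NA.Splitting Q cov) :
    ∀ E : NA.Subalgebra α, E.carrier ⊆ Q.carrier → NA.SpecialExt E := fun _ hE =>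
  ⟨fun _ _ _ ha hb hc hne _ _ _ hx hy hxa hyb =>
      hQ.le_comp_of_splitting hsplit hE ha hb hc hne hx hy hxa hyb,
    fun _ ha haa _ _ hx hy hxa hya =>
      hQ.comp_inf_ne_bot_of_splitting hsplit hE ha haa hx hy hxa hya⟩

/-- Every Monk algebra obtained from E^{23}_q by splitting is a
special extension of every subalgebra of E^{23}_q. -/
theorem stmt1 {α : Type} [RA α] (hat : IsAtomic α)
    (hsym : NA.Symmetric α) (hint : NA.Integral α)
    (q : ℕ) (hq : 4 ≤ q) (Q : NA.Subalgebra α) (e : Fin q → α)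
    (hQ : NA.IsE23Sub Q q e) (cov : α → α) (hsplit : NA.Splitting Q cov) :
    ∀ E : NA.Subalgebra α, E.carrier ⊆ Q.carrier → NA.SpecialExt E :=
  stmt1_general q Q e hQ cov hsplit
end

section
/- Every proper subalgebra of E^{23}_q contains a flexible atom, and hence every proper subalgebra of E^{23}_q is representable. -/
universe u v

/-!
A diversity atom of a subalgebra `E` of E^{23}_q is a join of atoms of the ambient algebra.
Two distinct atoms of `E` compose to 0', since their ambient atoms are distinct and already do;
an atom of `E` containing two ambient atoms `x ≠ y` composes with itself to `⊤ = 1' + x;y`.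
If `E` is proper, some atom of `E` is not an ambient atom, and it is flexible in `E`.

The representation of `E` is Comer's: a step-by-step construction whose points are formal
witnesses. The witness of an edge `(x, y)` of color `c ≤ t;s` is joined to `x` by color `t`, to `y`
by color `s`, and to every other point by the flexible atom `A`. In every triangle the youngest
point is either joined to another by `A`, which is consistent by flexibility, or is the witness of
the opposite edge.
-/

namespace NA

variable {α : Type u} [NA α] {E : Subalgebra α} {a b c t s A : α}

lemma comp_mono {x x' y y' : α} (hx : x ≤ x') (hy : y ≤ y') : comp x y ≤ comp x' y' :=
  calc comp x y ≤ comp x' y := by rw [← sup_eq_right.mpr hx, sup_comp]; exact le_sup_left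
    _ ≤ comp x' y' := by rw [← sup_eq_right.mpr hy, comp_sup]; exact le_sup_left

namespace Subalgebra

lemma inf_mem_s2 (ha : a ∈ E.carrier) (hb : b ∈ E.carrier) : a ⊓ b ∈ E.carrier := by
  simpa using E.compl_mem _ (E.sup_mem _ (E.compl_mem _ ha) _ (E.compl_mem _ hb))

namespace AtomOf

lemma le_or_inf_eq_bot (ht : E.AtomOf t) (ha : a ∈ E.carrier) : t ≤ a ∨ t ⊓ a = ⊥ :=
  (ht.2.2 _ (inf_mem_s2 ht.1 ha) inf_le_left).symm.imp inf_eq_left.mp id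

lemma le_iff_inf_ne_bot (ht : E.AtomOf t) (ha : a ∈ E.carrier) : t ≤ a ↔ t ⊓ a ≠ ⊥ :=
  ⟨fun h => by rw [inf_eq_left.mpr h]; exact ht.2.1, (ht.le_or_inf_eq_bot ha).resolve_right⟩

lemma le_compl_iff (ht : E.AtomOf t) (ha : a ∈ E.carrier) : t ≤ aᶜ ↔ ¬ t ≤ a :=
  ⟨fun h h' => ht.2.1 (by simpa using le_inf h' h), fun h =>
    le_compl_iff_disjoint_right.mpr (disjoint_iff.mpr ((ht.le_or_inf_eq_bot ha).resolve_left h))⟩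

lemma le_sup_iff (ht : E.AtomOf t) (ha : a ∈ E.carrier) (hb : b ∈ E.carrier) :
    t ≤ a ⊔ b ↔ t ≤ a ∨ t ≤ b := by
  refine ⟨fun h => ?_, fun h => h.elim le_sup_of_le_left le_sup_of_le_right⟩
  by_contra! hn
  have hc : t ≤ (a ⊔ b)ᶜ := by
    rw [compl_sup]
    exact le_inf ((ht.le_compl_iff ha).mpr hn.1) ((ht.le_compl_iff hb).mpr hn.2)
  exact (ht.le_compl_iff (E.sup_mem _ ha _ hb)).mp hc h

lemma eq_of_le (ht : E.AtomOf t) (hs : E.AtomOf s) (h : t ≤ s) : t = s :=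
  (hs.2.2 t ht.1 h).resolve_left ht.2.1

lemma inf_eq_bot_of_ne (ht : E.AtomOf t) (hs : E.AtomOf s) (hts : t ≠ s) : t ⊓ s = ⊥ :=
  (ht.le_or_inf_eq_bot hs.1).resolve_left fun h => hts (ht.eq_of_le hs h)

end AtomOf

section Finite

variable [Finite α]

lemma exists_least_ge (E : Subalgebra α) (v : α) :
    ∃ m ∈ E.carrier, v ≤ m ∧ ∀ b ∈ E.carrier, v ≤ b → m ≤ b := by
  obtain ⟨m, ⟨hmE, hvm⟩, hmin⟩ :=
    exists_minimal_of_wellFoundedLT (fun b => b ∈ E.carrier ∧ v ≤ b) ⟨⊤, E.top_mem, le_top⟩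
  exact ⟨m, hmE, hvm, fun b hb hvb =>
    (le_inf_iff.mp (hmin ⟨inf_mem_s2 hmE hb, le_inf hvm hvb⟩ inf_le_left)).2⟩

lemma exists_atomOf_ge {x : α} (hx : IsAtom x) :
    ∃ t, E.AtomOf t ∧ x ≤ t ∧ ∀ b ∈ E.carrier, x ≤ b → t ≤ b := by
  obtain ⟨m, hmE, hxm, hleast⟩ := E.exists_least_ge x
  refine ⟨m, ⟨hmE, fun h => hx.1 (le_bot_iff.mp (hxm.trans h.le)), fun b hb hbm => ?_⟩,
    hxm, hleast⟩
  rcases hx.le_iff.mp (inf_le_left : x ⊓ b ≤ x) with h | h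
  · have hxb : x ≤ bᶜ := le_compl_iff_disjoint_right.mpr (disjoint_iff.mpr h)
    exact Or.inl (le_compl_self.mp (hbm.trans (hleast _ (E.compl_mem _ hb) hxb)))
  · exact Or.inr (le_antisymm hbm (hleast b hb (inf_eq_left.mp h)))

lemma exists_atomOf_le {v : α} (hv : v ∈ E.carrier) (hv0 : v ≠ ⊥) :
    ∃ t, E.AtomOf t ∧ t ≤ v := by
  obtain ⟨x, hx, hxv⟩ := (eq_bot_or_exists_atom_le v).resolve_left hv0
  obtain ⟨t, ht, -, hleast⟩ := exists_atomOf_ge (E := E) hx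
  exact ⟨t, ht, hleast v hv hxv⟩

lemma le_of_forall_atomOf_le (ha : a ∈ E.carrier) (hb : b ∈ E.carrier)
    (h : ∀ t, E.AtomOf t → t ≤ a → t ≤ b) : a ≤ b := by
  by_contra hab
  obtain ⟨t, ht, hta⟩ := exists_atomOf_le (inf_mem_s2 ha (E.compl_mem _ hb))
    fun h0 => hab (disjoint_compl_right_iff.mp (disjoint_iff.mpr h0))
  exact (ht.le_compl_iff hb).mp (hta.trans inf_le_right) (h t ht (hta.trans inf_le_left))

lemma carrier_eq_univ_of_forall_isAtom (h : ∀ t, E.AtomOf t → IsAtom t) :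
    E.carrier = Set.univ := by
  have hatom : ∀ x, IsAtom x → x ∈ E.carrier := fun x hx => by
    obtain ⟨t, ht, hxt, -⟩ := exists_atomOf_ge (E := E) hx
    rw [((h t ht).le_iff.mp hxt).resolve_left hx.1]
    exact ht.1
  refine Set.eq_univ_of_forall fun v => ?_
  obtain ⟨m, hmE, hvm, hleast⟩ := E.exists_least_ge v
  suffices m ≤ v from le_antisymm this hvm ▸ hmE
  by_contra hmv
  obtain ⟨x, hx, hxm⟩ := (eq_bot_or_exists_atom_le (m ⊓ vᶜ)).resolve_left
    fun h0 => hmv (disjoint_compl_right_iff.mp (disjoint_iff.mpr h0))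
  have hvx : v ≤ xᶜ := le_compl_comm.mp (hxm.trans inf_le_right)
  have hmx := hleast _ (inf_mem_s2 hmE (E.compl_mem _ (hatom x hx))) (le_inf hvm hvx)
  exact hx.1 (le_compl_self.mp ((hxm.trans inf_le_left).trans (hmx.trans inf_le_right)))

end Finite

end Subalgebra

lemma atomOf_ide (hint : Integral α) : E.AtomOf (ide : α) :=
  ⟨E.ide_mem, hint.1, fun _ _ hb => hint.le_iff.mp hb⟩

lemma Subalgebra.AtomOf.eq_ide_or_divAtomOf (hint : Integral α) (ht : E.AtomOf t) :
    t = ide ∨ E.DivAtomOf t :=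
  or_iff_not_imp_left.mpr fun hne =>
    ⟨ht, (ht.le_compl_iff E.ide_mem).mpr fun h => hne (ht.eq_of_le (atomOf_ide hint) h)⟩

lemma le_comp_iff_le_comp_right (hsym : Symmetric α) (ha : a ∈ E.carrier) (hb : E.AtomOf b)
    (hc : E.AtomOf c) : c ≤ comp a b ↔ b ≤ comp a c := by
  rw [hc.le_iff_inf_ne_bot (E.comp_mem _ ha _ hb.1),
    hb.le_iff_inf_ne_bot (E.comp_mem _ ha _ hc.1), inf_comm, inf_comm b, ne_eq, ne_eq, peirce1,
    hsym a]

lemma le_comp_iff_le_comp_left (hsym : Symmetric α) (ha : E.AtomOf a) (hb : b ∈ E.carrier)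
    (hc : E.AtomOf c) : c ≤ comp a b ↔ a ≤ comp c b := by
  rw [hc.le_iff_inf_ne_bot (E.comp_mem _ ha.1 _ hb),
    ha.le_iff_inf_ne_bot (E.comp_mem _ hc.1 _ hb), inf_comm, inf_comm a, ne_eq, ne_eq, peirce2,
    hsym b]

lemma le_comp_comm (hsym : Symmetric α) (ha : E.AtomOf a) (hb : E.AtomOf b) (hc : E.AtomOf c) :
    c ≤ comp a b ↔ c ≤ comp b a := by
  rw [le_comp_iff_le_comp_right hsym ha.1 hb hc, le_comp_iff_le_comp_left hsym ha hc.1 hb,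
    le_comp_iff_le_comp_right hsym hb.1 ha hc]

lemma ide_le_comp_self (hsym : Symmetric α) (hint : Integral α) (ht : E.AtomOf t) :
    ide ≤ comp t t := by
  rw [le_comp_iff_le_comp_left hsym ht ht.1 (atomOf_ide hint), ide_comp]

lemma eq_of_ide_le_comp (hsym : Symmetric α) (hint : Integral α) (ht : E.AtomOf t)
    (hs : E.AtomOf s) (h : ide ≤ comp t s) : t = s := by
  rw [le_comp_iff_le_comp_left hsym ht hs.1 (atomOf_ide hint), ide_comp] at h
  exact ht.eq_of_le hs h

lemma exists_atomOf_le_right [Finite α] (hsym : Symmetric α) (hc : E.AtomOf c)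
    (ha : a ∈ E.carrier) (hb : b ∈ E.carrier) (h : c ≤ comp a b) :
    ∃ s, E.AtomOf s ∧ s ≤ b ∧ c ≤ comp a s := by
  have hne : comp a c ⊓ b ≠ ⊥ := by
    rw [← hsym a, ne_eq, ← peirce1, inf_eq_right.mpr h]
    exact hc.2.1
  obtain ⟨s, hs, hsle⟩ :=
    Subalgebra.exists_atomOf_le (Subalgebra.inf_mem_s2 (E.comp_mem _ ha _ hc.1) hb) hne
  exact ⟨s, hs, hsle.trans inf_le_right,
    (le_comp_iff_le_comp_right hsym ha hs hc).mpr (hsle.trans inf_le_left)⟩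

lemma exists_atomOf_le_left [Finite α] (hsym : Symmetric α) (hc : E.AtomOf c)
    (ha : a ∈ E.carrier) (hb : b ∈ E.carrier) (h : c ≤ comp a b) :
    ∃ t, E.AtomOf t ∧ t ≤ a ∧ c ≤ comp t b := by
  have hne : comp c b ⊓ a ≠ ⊥ := by
    rw [← hsym b, ne_eq, ← peirce2, inf_eq_right.mpr h]
    exact hc.2.1
  obtain ⟨t, ht, htle⟩ :=
    Subalgebra.exists_atomOf_le (Subalgebra.inf_mem_s2 (E.comp_mem _ hc.1 _ hb) ha) hne
  exact ⟨t, ht, htle.trans inf_le_right,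
    (le_comp_iff_le_comp_left hsym ht hb hc).mpr (htle.trans inf_le_left)⟩

lemma Subalgebra.AtomOf.le_comp_iff [Finite α] (hsym : Symmetric α) (hc : E.AtomOf c)
    (ha : a ∈ E.carrier) (hb : b ∈ E.carrier) :
    c ≤ comp a b ↔ ∃ t s, E.AtomOf t ∧ E.AtomOf s ∧ t ≤ a ∧ s ≤ b ∧ c ≤ comp t s := by
  refine ⟨fun h => ?_, fun ⟨t, s, _, _, hta, hsb, h⟩ => h.trans (comp_mono hta hsb)⟩
  obtain ⟨s, hs, hsb, h⟩ := exists_atomOf_le_right hsym hc ha hb h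
  obtain ⟨t, ht, hta, h⟩ := exists_atomOf_le_left hsym hc ha hs.1 h
  exact ⟨t, s, ht, hs, hta, hsb, h⟩

lemma FlexibleOf.div_le_comp (hA : FlexibleOf E A) (ht : E.DivAtomOf t) : div ≤ comp t A := by
  by_cases htA : t = A
  · rw [htA, hA.2.1]
    exact le_top
  · rw [hA.2.2 t ht htA]

lemma FlexibleOf.le_comp (hsym : Symmetric α) (hA : FlexibleOf E A) (ht : E.DivAtomOf t)
    (hs : E.DivAtomOf s) (hc : E.DivAtomOf c) (htsA : t = A ∨ s = A) : c ≤ comp t s := by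
  rcases htsA with rfl | rfl
  · rw [le_comp_iff_le_comp_left hsym hA.1.1 hs.1.1 hc.1,
      le_comp_iff_le_comp_right hsym hc.1.1 hs.1 hA.1.1]
    exact hs.2.trans (hA.div_le_comp hc)
  · exact hc.2.trans (hA.div_le_comp ht)

inductive WitnessTree (α : Type u)
  | root : WitnessTree α
  | wit (a b : WitnessTree α) (t s : α) : WitnessTree α

namespace WitnessTree

def depth : WitnessTree α → ℕ
  | root => 0
  | wit a b _ _ => max a.depth b.depth + 1

variable (E A)

open Classical in
/-- `label E A (wit a b t s)` assigns the colors `t` and `s` to the edges to `a` and `b` when the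
witness is admissible (the condition of `Admissible`, inlined to make the recursion structural);
otherwise `wit a b t s` is joined to every point by `A`. -/
noncomputable def label : WitnessTree α → WitnessTree α → Option α
  | root, _ => none
  | wit a b t s, y =>
    if E.DivAtomOf t ∧ E.DivAtomOf s ∧
        (if a = b then ide else (label a b).getD ((label b a).getD A)) ≤ comp t s then
      if y = a then some t else if y = b then some s else none
    else none

open Classical in
noncomputable def color (x y : WitnessTree α) : α :=
  if x = y then ide else (label E A x y).getD ((label E A y x).getD A)

def Admissible (a b : WitnessTree α) (t s : α) : Prop :=
  E.DivAtomOf t ∧ E.DivAtomOf s ∧ color E A a b ≤ comp t s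

variable {E A} {x y z a b : WitnessTree α}

open Classical in
lemma label_wit (t s : α) (y : WitnessTree α) :
    label E A (wit a b t s) y =
      if Admissible E A a b t s then (if y = a then some t else if y = b then some s else none)
      else none := by
  rw [label]
  by_cases h : Admissible E A a b t s
  · rw [if_pos h]; exact if_pos h
  · rw [if_neg h]; exact if_neg h

lemma label_wit_eq_some {t s c : α} (h : label E A (wit a b t s) y = some c) :
    Admissible E A a b t s ∧ (y = a ∧ c = t ∨ y = b ∧ c = s) := by
  rw [label_wit] at h
  split_ifs at h with hv hya hyb
  · exact ⟨hv, .inl ⟨hya, (Option.some_inj.mp h).symm⟩⟩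
  · exact ⟨hv, .inr ⟨hyb, (Option.some_inj.mp h).symm⟩⟩

lemma label_eq_some {c : α} (h : label E A x y = some c) :
    ∃ a b t s, x = wit a b t s ∧ Admissible E A a b t s ∧ (y = a ∧ c = t ∨ y = b ∧ c = s) := by
  cases x with
  | root => cases h
  | wit a b t s => exact ⟨a, b, t, s, rfl, label_wit_eq_some h⟩

lemma depth_lt_of_label_eq_some {c : α} (h : label E A x y = some c) : y.depth < x.depth := by
  obtain ⟨a, b, t, s, rfl, -, hy⟩ := label_eq_some h
  rcases hy with ⟨rfl, -⟩ | ⟨rfl, -⟩ <;> simp only [depth] <;> omega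

lemma divAtomOf_of_label_eq_some {c : α} (h : label E A x y = some c) : E.DivAtomOf c := by
  obtain ⟨_, _, _, _, -, hv, hy⟩ := label_eq_some h
  rcases hy with ⟨-, rfl⟩ | ⟨-, rfl⟩
  exacts [hv.1, hv.2.1]

lemma label_wit_left {t s : α} (h : Admissible E A a b t s) :
    label E A (wit a b t s) a = some t := by
  rw [label_wit, if_pos h, if_pos rfl]

lemma label_wit_right {t s : α} (h : Admissible E A a b t s) (hab : a ≠ b) :
    label E A (wit a b t s) b = some s := by
  rw [label_wit, if_pos h, if_neg hab.symm, if_pos rfl]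

lemma color_self (x : WitnessTree α) : color E A x x = ide := if_pos rfl

lemma color_of_ne (h : x ≠ y) :
    color E A x y = (label E A x y).getD ((label E A y x).getD A) := if_neg h

lemma color_comm (x y : WitnessTree α) : color E A x y = color E A y x := by
  by_cases hxy : x = y
  · rw [hxy]
  rw [color_of_ne hxy, color_of_ne (Ne.symm hxy)]
  cases hxy' : label E A x y with
  | none => cases label E A y x <;> rfl
  | some c =>
    cases hyx : label E A y x with
    | none => rfl
    | some d =>
      have := depth_lt_of_label_eq_some hxy'
      have := depth_lt_of_label_eq_some hyx
      omega

lemma color_eq_of_label_eq_some {c : α} (h : label E A x y = some c) : color E A x y = c := by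
  have hxy : x ≠ y := by
    rintro rfl
    exact (depth_lt_of_label_eq_some h).false
  rw [color_of_ne hxy, h, Option.getD_some]

lemma color_divAtomOf (hA : E.DivAtomOf A) (hxy : x ≠ y) : E.DivAtomOf (color E A x y) := by
  rw [color_of_ne hxy]
  cases hxy' : label E A x y with
  | some c => exact divAtomOf_of_label_eq_some hxy'
  | none =>
    cases hyx : label E A y x with
    | some c => exact divAtomOf_of_label_eq_some hyx
    | none => exact hA

lemma color_atomOf (hint : Integral α) (hA : E.DivAtomOf A) (x y : WitnessTree α) :
    E.AtomOf (color E A x y) := by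
  by_cases hxy : x = y
  · rw [hxy, color_self]
    exact atomOf_ide hint
  · exact (color_divAtomOf hA hxy).1

lemma color_le_ide_iff (hA : E.DivAtomOf A) : color E A x y ≤ ide ↔ x = y := by
  refine ⟨fun h => by_contra fun hxy => ?_, fun h => by rw [h, color_self]⟩
  have hd := color_divAtomOf hA hxy
  exact hd.1.2.1 (by simpa [div] using le_inf h hd.2)

lemma label_eq_some_of_color_ne (hxz : x ≠ z) (hd : x.depth ≤ z.depth)
    (hA : color E A z x ≠ A) : label E A z x = some (color E A z x) := by
  have hxz' : label E A x z = none := by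
    cases h : label E A x z with
    | none => rfl
    | some c =>
      have := depth_lt_of_label_eq_some h
      omega
  rw [color_of_ne (Ne.symm hxz), hxz'] at hA ⊢
  cases h : label E A z x with
  | none =>
    rw [h] at hA
    exact absurd rfl hA
  | some c => rfl

lemma color_le_of_label_eq_some (hsym : Symmetric α) (hA : E.DivAtomOf A) {c d : α}
    (hx : label E A z x = some c) (hy : label E A z y = some d) (hxy : x ≠ y) :
    color E A x y ≤ comp c d := by
  obtain ⟨a, b, t, s, rfl, hv, hxab⟩ := label_eq_some hx
  obtain ⟨-, hyab⟩ := label_wit_eq_some hy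
  rcases hxab with ⟨rfl, rfl⟩ | ⟨rfl, rfl⟩ <;> rcases hyab with ⟨rfl, rfl⟩ | ⟨rfl, rfl⟩
  · exact absurd rfl hxy
  · exact hv.2.2
  · rw [color_comm, ← le_comp_comm hsym hv.1.1 hv.2.1.1 (color_divAtomOf hA hxy.symm).1]
    exact hv.2.2
  · exact absurd rfl hxy

lemma color_le_comp_of_depth_le (hsym : Symmetric α) (hA : FlexibleOf E A) (hxy : x ≠ y)
    (hxz : x ≠ z) (hyz : y ≠ z) (hx : x.depth ≤ z.depth) (hy : y.depth ≤ z.depth) :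
    color E A x y ≤ comp (color E A x z) (color E A z y) := by
  have hcxy := color_divAtomOf hA.1 hxy
  have hcxz := color_divAtomOf hA.1 hxz
  have hczy := color_divAtomOf hA.1 (Ne.symm hyz)
  by_cases hzx : color E A z x = A
  · exact hA.le_comp hsym hcxz hczy hcxy (.inl (by rw [color_comm, hzx]))
  by_cases hzy : color E A z y = A
  · exact hA.le_comp hsym hcxz hczy hcxy (.inr hzy)
  rw [color_comm x z]
  exact color_le_of_label_eq_some hsym hA.1 (label_eq_some_of_color_ne hxz hx hzx)
    (label_eq_some_of_color_ne hyz hy hzy) hxy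

theorem color_le_comp_color (hsym : Symmetric α) (hint : Integral α) (hA : FlexibleOf E A)
    (x y z : WitnessTree α) : color E A x z ≤ comp (color E A x y) (color E A y z) := by
  by_cases hxy : x = y
  · rw [hxy, color_self, ide_comp]
  by_cases hyz : y = z
  · rw [hyz, color_self, comp_ide]
  by_cases hxz : x = z
  · rw [hxz, color_self, color_comm z y]
    exact ide_le_comp_self hsym hint (color_atomOf hint hA.1 y z)
  have hcxy := color_atomOf hint hA.1 x y
  have hcxz := color_atomOf hint hA.1 x z
  have hcyz := color_atomOf hint hA.1 y z
  by_cases hzmax : x.depth ≤ z.depth ∧ y.depth ≤ z.depth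
  · have h := color_le_comp_of_depth_le hsym hA hxy hxz hyz hzmax.1 hzmax.2
    rw [color_comm z y, le_comp_iff_le_comp_left hsym hcxz hcyz.1 hcxy] at h
    exact h
  by_cases hymax : x.depth ≤ y.depth ∧ z.depth ≤ y.depth
  · exact color_le_comp_of_depth_le hsym hA hxz hxy (Ne.symm hyz) hymax.1 hymax.2
  have h := color_le_comp_of_depth_le hsym hA hyz (Ne.symm hxy) (Ne.symm hxz) (by omega) (by omega)
  rw [color_comm y x, le_comp_iff_le_comp_right hsym hcxy.1 hcxz hcyz] at h
  exact h

lemma exists_color_eq (hsym : Symmetric α) (hint : Integral α) (hA : E.DivAtomOf A) {t s : α}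
    (ht : E.AtomOf t) (hs : E.AtomOf s) (h : color E A x y ≤ comp t s) :
    ∃ z, color E A x z = t ∧ color E A z y = s := by
  have hcxy := color_atomOf hint hA x y
  rcases ht.eq_ide_or_divAtomOf hint with rfl | ht'
  · rw [ide_comp] at h
    exact ⟨x, color_self x, hcxy.eq_of_le hs h⟩
  rcases hs.eq_ide_or_divAtomOf hint with rfl | hs'
  · rw [comp_ide] at h
    exact ⟨y, hcxy.eq_of_le ht h, color_self y⟩
  have hv : Admissible E A x y t s := ⟨ht', hs', h⟩
  refine ⟨wit x y t s, by rw [color_comm]; exact color_eq_of_label_eq_some (label_wit_left hv), ?_⟩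
  by_cases hxy : x = y
  · subst hxy
    obtain rfl : t = s := eq_of_ide_le_comp hsym hint ht hs (color_self x ▸ h)
    exact color_eq_of_label_eq_some (label_wit_left hv)
  · exact color_eq_of_label_eq_some (label_wit_right hv hxy)

lemma exists_color_root_eq (hsym : Symmetric α) (hint : Integral α) (hA : E.DivAtomOf A) {t : α}
    (ht : E.AtomOf t) : ∃ z, color E A root z = t := by
  have h : color E A root root ≤ comp t t := by
    rw [color_self]
    exact ide_le_comp_self hsym hint ht
  obtain ⟨z, hz, -⟩ := exists_color_eq hsym hint hA ht ht h
  exact ⟨z, hz⟩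

noncomputable def subRepresentation [Finite α] (hsym : Symmetric α) (hint : Integral α)
    (hA : FlexibleOf E A) : SubRepresentation E (WitnessTree α) where
  toFun a := {p | color E A p.1 p.2 ≤ a}
  inj a ha b hb h := by
    have hiff : ∀ t, E.AtomOf t → (t ≤ a ↔ t ≤ b) := fun t ht => by
      obtain ⟨z, rfl⟩ := exists_color_root_eq hsym hint hA.1 ht
      exact Set.ext_iff.mp h (root, z)
    exact le_antisymm (Subalgebra.le_of_forall_atomOf_le ha hb fun t ht => (hiff t ht).mp)
      (Subalgebra.le_of_forall_atomOf_le hb ha fun t ht => (hiff t ht).mpr)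
  map_sup a ha b hb := Set.ext fun p => (color_atomOf hint hA.1 p.1 p.2).le_sup_iff ha hb
  map_compl a ha := Set.ext fun p => by
    simp only [Set.mem_ofPred_eq, Set.mem_sdiff, le_top, true_and]
    exact (color_atomOf hint hA.1 p.1 p.2).le_compl_iff ha
  map_comp a ha b hb := Set.ext fun p => by
    simp only [Set.mem_ofPred_eq]
    rw [(color_atomOf hint hA.1 p.1 p.2).le_comp_iff hsym ha hb]
    constructor
    · rintro ⟨t, s, ht, hs, hta, hsb, h⟩
      obtain ⟨z, rfl, rfl⟩ := exists_color_eq hsym hint hA.1 ht hs h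
      exact ⟨z, hta, hsb⟩
    · rintro ⟨z, hza, hzb⟩
      exact ⟨_, _, color_atomOf hint hA.1 _ _, color_atomOf hint hA.1 _ _, hza, hzb,
        color_le_comp_color hsym hint hA p.1 z p.2⟩
  map_conv a _ := Set.ext fun p => by
    simp only [Set.mem_ofPred_eq]
    rw [hsym a, color_comm]
  map_ide := Set.ext fun p => by
    simp only [Set.mem_ofPred_eq, le_top, true_and]
    exact color_le_ide_iff hA.1

end WitnessTree

namespace IsE23

variable {q : ℕ} {e : Fin q → α}

lemma comp_eq_div (hE : IsE23 q e) {x y : α} (hx : DivAtom x) (hy : DivAtom y) (hxy : x ≠ y) :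
    comp x y = div := by
  obtain ⟨-, hint, -, he0, -, hatoms, hdiv, -⟩ := hE
  have index : ∀ {x : α}, DivAtom x → ∃ i : Fin q, (i : ℕ) ≠ 0 ∧ x = e i := fun {x} hx => by
    obtain ⟨i, rfl⟩ := hatoms x hx.1
    refine ⟨i, fun h0 => hint.1 (le_compl_self.mp ?_), rfl⟩
    have h := hx.2
    rwa [he0 i h0] at h
  obtain ⟨i, hi, rfl⟩ := index hx
  obtain ⟨j, hj, rfl⟩ := index hy
  exact hdiv i j hi hj fun h => hxy (h ▸ rfl)

variable [Finite α]

lemma comp_eq_div_of_divAtomOf (hE : IsE23 q e) (ht : E.DivAtomOf t) (hs : E.DivAtomOf s)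
    (hts : t ≠ s) : comp t s = div := by
  have hdisj := ht.1.inf_eq_bot_of_ne hs.1 hts
  apply le_antisymm
  · refine le_compl_iff_disjoint_right.mpr (disjoint_iff.mpr ((peirce1 t s ide).mpr ?_))
    rwa [hE.1 t, comp_ide]
  · obtain ⟨x, hx, hxt⟩ := (eq_bot_or_exists_atom_le t).resolve_left ht.1.2.1
    obtain ⟨y, hy, hys⟩ := (eq_bot_or_exists_atom_le s).resolve_left hs.1.2.1
    have hxy : x ≠ y := by
      rintro rfl
      exact hx.1 (le_bot_iff.mp (hdisj ▸ le_inf hxt hys))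
    calc div = comp x y := (hE.comp_eq_div ⟨hx, hxt.trans ht.2⟩ ⟨hy, hys.trans hs.2⟩ hxy).symm
      _ ≤ comp t s := comp_mono hxt hys

lemma comp_self_eq_top (hE : IsE23 q e) (ht : E.DivAtomOf t) (hnat : ¬ IsAtom t) :
    comp t t = ⊤ := by
  obtain ⟨x, hx, hxt⟩ := (eq_bot_or_exists_atom_le t).resolve_left ht.1.2.1
  obtain ⟨y, hy, hyt⟩ := (eq_bot_or_exists_atom_le (t ⊓ xᶜ)).resolve_left fun h =>
    hnat ((hx.le_iff_eq ht.1.2.1).mp (disjoint_compl_right_iff.mp (disjoint_iff.mpr h)) ▸ hx)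
  have hyx : y ≠ x := by
    rintro rfl
    exact hy.1 (le_compl_self.mp (hyt.trans inf_le_right))
  have hdiv : div ≤ comp t t :=
    calc div = comp y x := (hE.comp_eq_div ⟨hy, (hyt.trans inf_le_left).trans ht.2⟩
          ⟨hx, hxt.trans ht.2⟩ hyx).symm
      _ ≤ comp t t := comp_mono (hyt.trans inf_le_left) hxt
  have hide : ide ≤ comp t t := ide_le_comp_self hE.1 hE.2.1 ht.1
  exact top_le_iff.mp (by simpa [div] using sup_le hide hdiv)

theorem exists_flexibleOf (hE : IsE23 q e) (hproper : E.carrier ≠ Set.univ) :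
    ∃ A, FlexibleOf E A := by
  obtain ⟨A, hA, hnat⟩ : ∃ A, E.AtomOf A ∧ ¬ IsAtom A := by
    by_contra! h
    exact hproper (Subalgebra.carrier_eq_univ_of_forall_isAtom h)
  have hAdiv : E.DivAtomOf A :=
    (hA.eq_ide_or_divAtomOf hE.2.1).resolve_left fun h => hnat (h ▸ hE.2.1)
  exact ⟨A, hAdiv, hE.comp_self_eq_top hAdiv hnat,
    fun x hx hxA => hE.comp_eq_div_of_divAtomOf hx hAdiv hxA⟩

end IsE23

end NA

theorem stmt2_general {α : Type} [RA α] [Fintype α] (q : ℕ)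
    (e : Fin q → α) (hE : NA.IsE23 q e)
    (E : NA.Subalgebra α) (hproper : E.carrier ≠ Set.univ) :
    (∃ a : α, NA.FlexibleOf E a) ∧
    ∃ X : Type, Nonempty (NA.SubRepresentation E X) := by
  obtain ⟨A, hA⟩ := hE.exists_flexibleOf hproper
  exact ⟨⟨A, hA⟩, NA.WitnessTree α, ⟨NA.WitnessTree.subRepresentation hE.1 hE.2.1 hA⟩⟩

/-- Every proper subalgebra of E^{23}_q contains a flexible atom,
and hence every proper subalgebra of E^{23}_q is representable. -/
theorem stmt2 {α : Type} [RA α] [Fintype α] (q : ℕ) (hq : 4 ≤ q)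
    (e : Fin q → α) (hE : NA.IsE23 q e)
    (E : NA.Subalgebra α) (hproper : E.carrier ≠ Set.univ) :
    (∃ a : α, NA.FlexibleOf E a) ∧
    ∃ X : Type, Nonempty (NA.SubRepresentation E X) :=
  stmt2_general q e hE E hproper
end
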